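/- If X is a non-periodic uniformly recurrent sequence, then the minimal length of a return word on the prefix X[0..n] tends to infinity as n tends to infinity. -/

import Mathlib

namespace Cobham

open Filter

variable {A : Type*} {B : Type*}

/-- The factor `X_i X_{i+1} ... X_{i+n-1}` of the sequence `X`. -/
def word (X : ℕ → A) (i n : ℕ) : List A := (List.range n).map fun k => X (i + k)

/-- `u` occurs in `X` at position `i`. -/
def OccursAt (X : ℕ → A) (u : List A) (i : ℕ) : Prop := word X i u.length = u

def IsFactor (X : ℕ → A) (u : List A) : Prop := ∃ i, OccursAt X u i

def IsPrefix (X : ℕ → A) (u : List A) : Prop := OccursAt X u 0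

/-- Uniformly recurrent: gaps between successive occurrences of any factor are bounded. -/
def UnifRec (X : ℕ → A) : Prop :=
  ∀ u, IsFactor X u → ∃ g : ℕ, ∀ i : ℕ, ∃ j, i ≤ j ∧ j ≤ i + g ∧ OccursAt X u j

/-- Return words on `u`: factors between two successive occurrences of `u` in `X`. -/
def ReturnWords (X : ℕ → A) (u : List A) : Set (List A) :=
  { v | ∃ i j, OccursAt X u i ∧ OccursAt X u j ∧ i < j ∧
      (∀ k, i < k → k < j → ¬ OccursAt X u k) ∧ v = word X i (j - i) }

/-- Application of a morphism to a word, by concatenation. -/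
def wordApply (σ : A → List B) (w : List A) : List B := w.flatMap σ

/-- Iterate of a morphism. -/
def mPow (σ : A → List A) : ℕ → A → List A
  | 0 => fun a => [a]
  | k + 1 => fun a => wordApply σ (mPow σ k a)

def Nonerasing (σ : A → List A) : Prop := ∀ a, σ a ≠ []

/-- Primitivity: some power of the morphism maps every letter to a word
containing every letter. -/
def Primitive (σ : A → List A) : Prop := ∃ k, 0 < k ∧ ∀ a b : A, b ∈ mPow σ k a

/-- Primitivity restricted to a set of letters. -/
def PrimitiveOn (σ : A → List A) (S : Set A) : Prop :=
  ∃ k, 0 < k ∧ ∀ a ∈ S, ∀ b ∈ S, b ∈ mPow σ k a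

/-- `X` is a fixed point of `σ`: the image of every prefix of `X` is a prefix of `X`. -/
def IsFixedPt (σ : A → List A) (X : ℕ → A) : Prop :=
  ∀ n, OccursAt X (wordApply σ (word X 0 n)) 0

def UltPeriodic (X : ℕ → A) : Prop :=
  ∃ N p : ℕ, 0 < p ∧ ∀ n, N ≤ n → X (n + p) = X n

def Periodic (X : ℕ → A) : Prop := ∃ p : ℕ, 0 < p ∧ ∀ n, X (n + p) = X n

/-- `u` occurs at position `i` inside the word `w`. -/
def WOcc (u w : List A) (i : ℕ) : Prop :=
  i + u.length ≤ w.length ∧ (w.drop i).take u.length = u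

/-- `D` is the derived sequence of `X` on `u`: a sequence of return words on `u`
whose concatenation is `X`. -/
def IsDerived (X : ℕ → A) (u : List A) (D : ℕ → List A) : Prop :=
  (∀ n, D n ∈ ReturnWords X u) ∧ ∀ n, OccursAt X ((word D 0 n).flatten) 0

/-- `τu` is the return substitution of `τ` on `u` (on the alphabet of return words):
`Θ_u ∘ τ_u = τ ∘ Θ_u`. -/
def RetSub (τ : A → List A) (X : ℕ → A) (u : List A)
    (τu : List A → List (List A)) : Prop :=
  ∀ r ∈ ReturnWords X u,
    (∀ s ∈ τu r, s ∈ ReturnWords X u) ∧ (τu r).flatten = wordApply τ r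

/-- Eigenvalue of a complex matrix. -/
def IsEig {n : Type*} [Fintype n] (M : Matrix n n ℂ) (μ : ℂ) : Prop :=
  ∃ v : n → ℂ, v ≠ 0 ∧ M.mulVec v = μ • v

/-- Incidence matrix of a morphism, as a complex matrix. -/
def incMat [Fintype A] [DecidableEq A] (σ : A → List A) : Matrix A A ℂ :=
  Matrix.of fun i j => (((σ j).count i : ℕ) : ℂ)

/-- Incidence matrix of a return substitution, indexed by the set of return words. -/
def retMat [DecidableEq A] (τu : List A → List (List A)) (S : Set (List A))
    [Fintype S] : Matrix S S ℂ :=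
  Matrix.of fun i j => (((τu (j : List A)).count (i : List A) : ℕ) : ℂ)

/-- `α` is the dominant eigenvalue of the incidence matrix of `σ`. -/
def IsDomEig [Fintype A] [DecidableEq A] (σ : A → List A) (α : ℝ) : Prop :=
  IsEig (incMat σ) (α : ℂ) ∧ ∀ μ : ℂ, IsEig (incMat σ) μ → ‖μ‖ ≤ α

/-- `X` is `α`-substitutive: the image under a letter-to-letter morphism of the
fixed point of a primitive substitution with dominant eigenvalue `α`. -/
def IsSubstitutiveWith {A : Type*} (α : ℝ) (X : ℕ → A) : Prop :=
  ∃ (C : Type) (hF : Fintype C) (hD : DecidableEq C) (σ : C → List C) (c : C)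
    (Y : ℕ → C) (ψ : C → A),
    Nonerasing σ ∧ (σ c).head? = some c ∧ Primitive σ ∧
    Y 0 = c ∧ IsFixedPt σ Y ∧ (∀ n, X n = ψ (Y n)) ∧ @IsDomEig C hF hD σ α

/-- Perron number: a real algebraic integer `α ≥ 1` strictly dominating the
absolute values of its other conjugates. -/
def IsPerron (α : ℝ) : Prop :=
  1 ≤ α ∧ IsIntegral ℤ α ∧
    ∀ β : ℂ, Polynomial.aeval β (minpoly ℤ α) = 0 → β ≠ (α : ℂ) → ‖β‖ < α

/-!
Two occurrences of the prefix `X[0..n]` at distance `d ≤ n` force that prefix to have period `d`.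
A non-periodic sequence has, for every `d > 0`, a position where `d` fails to be a period, so for
`n` large enough no `d ≤ L` can be the length of a return word on `X[0..n]`. Uniform recurrence
makes the set of return words nonempty, so its infimum is not the junk value `sInf ∅ = 0`.
-/

@[simp]
lemma length_word (X : ℕ → A) (i n : ℕ) : (word X i n).length = n := by
  simp [word]

lemma occursAt_word_zero_iff {X : ℕ → A} {m i : ℕ} :
    OccursAt X (word X 0 m) i ↔ ∀ k < m, X (i + k) = X k := by
  simp [OccursAt, word, List.ext_get_iff]

lemma apply_add_eq_of_occursAt_prefix {X : ℕ → A} {m i d k : ℕ}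
    (hi : OccursAt X (word X 0 m) i) (hd : OccursAt X (word X 0 m) (i + d))
    (hk : k + d < m) : X (k + d) = X k :=
  calc X (k + d) = X (i + (k + d)) := (occursAt_word_zero_iff.1 hi _ hk).symm
    _ = X (i + d + k) := by rw [add_comm k d, add_assoc]
    _ = X k := occursAt_word_zero_iff.1 hd _ (by omega)

lemma Periodic.ultPeriodic {X : ℕ → A} (hX : Periodic X) : UltPeriodic X :=
  let ⟨p, hp, hper⟩ := hX
  ⟨0, p, hp, fun n _ => hper n⟩

lemma exists_apply_add_ne_of_not_periodic {X : ℕ → A} (hX : ¬ Periodic X) {d : ℕ}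
    (hd : 0 < d) : ∃ k, X (k + d) ≠ X k := by
  by_contra! h
  exact hX ⟨d, hd, h⟩

lemma eventually_lt_length_of_mem_returnWords {X : ℕ → A} (hX : ¬ Periodic X) (L : ℕ) :
    ∀ᶠ n in atTop, ∀ v ∈ ReturnWords X (word X 0 n), L < v.length := by
  have hmismatch : ∀ᶠ n in atTop, ∀ d ∈ Finset.Icc 1 L, ∃ k, k + d < n ∧ X (k + d) ≠ X k := by
    refine (Filter.eventually_all_finset _).2 fun d hd => ?_
    obtain ⟨k, hk⟩ := exists_apply_add_ne_of_not_periodic hX (Finset.mem_Icc.1 hd).1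
    exact eventually_atTop.2 ⟨k + d + 1, fun n hn => ⟨k, by omega, hk⟩⟩
  filter_upwards [hmismatch] with n hn
  rintro v ⟨i, j, hi, hj, hij, -, rfl⟩
  rw [length_word]
  by_contra! hL
  obtain ⟨k, hkn, hk⟩ := hn (j - i) (Finset.mem_Icc.2 ⟨by omega, hL⟩)
  exact hk (apply_add_eq_of_occursAt_prefix hi (by rwa [Nat.add_sub_cancel' hij.le]) hkn)

lemma returnWords_nonempty_of_occursAt {X : ℕ → A} {u : List A} {i j : ℕ}
    (hi : OccursAt X u i) (hj : OccursAt X u j) (hij : i < j) :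
    (ReturnWords X u).Nonempty := by
  classical
  have hnext : ∃ j, i < j ∧ OccursAt X u j := ⟨j, hij, hj⟩
  obtain ⟨hlt, hocc⟩ := Nat.find_spec hnext
  exact ⟨_, i, Nat.find hnext, hi, hocc, hlt,
    fun k hik hk hocc => Nat.find_min hnext hk ⟨hik, hocc⟩, rfl⟩

lemma UnifRec.returnWords_nonempty {X : ℕ → A} (hX : UnifRec X) {u : List A}
    (hu : IsFactor X u) : (ReturnWords X u).Nonempty := by
  obtain ⟨i, hi⟩ := hu
  obtain ⟨g, hg⟩ := hX u ⟨i, hi⟩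
  obtain ⟨j, hij, -, hj⟩ := hg (i + 1)
  exact returnWords_nonempty_of_occursAt hi hj (by omega)

theorem stmt4 {A : Type*} (X : ℕ → A)
    (hX : UnifRec X) (hnp : ¬ UltPeriodic X) :
    Tendsto (fun n => sInf (List.length '' ReturnWords X (word X 0 (n + 1))))
      atTop atTop := by
  refine tendsto_atTop.2 fun L => ?_
  have hlong := (tendsto_add_atTop_nat 1).eventually
    (eventually_lt_length_of_mem_returnWords (mt Periodic.ultPeriodic hnp) L)
  filter_upwards [hlong] with n hn
  have hprefix : IsFactor X (word X 0 (n + 1)) := ⟨0, by simp [OccursAt]⟩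
  exact le_csInf ((hX.returnWords_nonempty hprefix).image _)
    (by rintro _ ⟨v, hv, rfl⟩; exact (hn v hv).le)

end Cobham
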